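/- arXiv:1912.12490 — 2 statements merged into one kernel-verified Lean document; each statement's English description precedes it below -/
import Mathlib

section
/- Let (X, τ_X) be a strongly locally spectral space and X_d ⊆ X. Then X_d is dense in the patch topology of X (the topology with basis { U \ V : U, V ∈ CO(X) }) if and only if X_d is decent, i.e. for all U, V ∈ CO(X), U ≠ V implies U ∩ X_d ≠ V ∩ X_d. -/
open Set TopologicalSpace Topology

/-- The family of compact open subsets of a topological space. -/
def CO (X : Type*) [TopologicalSpace X] : Set (Set X) := {U | IsCompact U ∧ IsOpen U}

/-- A spectral space: compact, T0, sober, the compact open sets form a basis and are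
closed under binary intersections. -/
def IsSpectralTopSpace (X : Type*) [TopologicalSpace X] : Prop :=
  CompactSpace X ∧ T0Space X ∧ QuasiSober X ∧
    TopologicalSpace.IsTopologicalBasis (CO X) ∧
    ∀ U ∈ CO X, ∀ V ∈ CO X, U ∩ V ∈ CO X

/-- The family of open subsets of `X` that are spectral spaces in the subspace
topology. -/
def SO (X : Type*) [TopologicalSpace X] : Set (Set X) :=
  {U | IsOpen U ∧ IsSpectralTopSpace ↥U}

/-- A strongly locally spectral space: locally spectral (the open spectral subspaces
cover `X`) and semispectral (the intersection of two compact open sets is compact). -/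
def StronglyLocallySpectral (X : Type*) [TopologicalSpace X] : Prop :=
  ⋃₀ SO X = Set.univ ∧ ∀ U ∈ CO X, ∀ V ∈ CO X, IsCompact (U ∩ V)

/-- The patch topology of a strongly locally spectral space: generated by the sets
`U \ V` for `U, V` compact open. -/
def patchTop (X : Type*) [TopologicalSpace X] : TopologicalSpace X :=
  TopologicalSpace.generateFrom {S | ∃ U ∈ CO X, ∃ V ∈ CO X, S = U \ V}

/-!
Since `CO X` covers `X` (an open spectral subspace is itself compact open) and is closed under
`∩` and `∪`, the sets `U \ V` with `U, V ∈ CO X` form a basis of the patch topology. So `Xd` is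
patch-dense iff it meets every nonempty `U \ V`. As `U \ V = U \ (U ∩ V)`, a point of `Xd` in
`U \ V` is exactly a witness that `U` and `U ∩ V` have different traces on `Xd`; and if `U ≠ V`,
one of `U \ V`, `V \ U` is nonempty.
-/

section TraceInjective

variable {X : Type*} {𝒞 : Set (Set X)} {s : Set X}

lemma diff_inter_nonempty_of_traces_ne
    (hinter : ∀ U ∈ 𝒞, ∀ V ∈ 𝒞, U ∩ V ∈ 𝒞)
    (hs : ∀ U ∈ 𝒞, ∀ V ∈ 𝒞, U ≠ V → U ∩ s ≠ V ∩ s)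
    {U V : Set X} (hU : U ∈ 𝒞) (hV : V ∈ 𝒞) (hUV : (U \ V).Nonempty) :
    (U \ V ∩ s).Nonempty := by
  obtain ⟨x, hxU, hxV⟩ := hUV
  have hne : U ≠ U ∩ V := fun h => hxV (h ▸ hxU : x ∈ U ∩ V).2
  have hsub : U ∩ V ∩ s ⊆ U ∩ s := fun y hy => ⟨hy.1.1, hy.2⟩
  obtain ⟨y, ⟨hyU, hys⟩, hy⟩ := not_subset.mp fun h => hs U hU _ (hinter U hU V hV) hne
    (h.antisymm hsub)
  exact ⟨y, ⟨hyU, fun hyV => hy ⟨⟨hyU, hyV⟩, hys⟩⟩, hys⟩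

lemma traces_ne_of_diff_inter_nonempty
    (hs : ∀ U ∈ 𝒞, ∀ V ∈ 𝒞, (U \ V).Nonempty → (U \ V ∩ s).Nonempty)
    {U V : Set X} (hU : U ∈ 𝒞) (hV : V ∈ 𝒞) (hUV : U ≠ V) : U ∩ s ≠ V ∩ s := by
  intro htr
  have subset_of_traces_eq : ∀ {A B : Set X}, A ∈ 𝒞 → B ∈ 𝒞 → A ∩ s = B ∩ s → A ⊆ B := by
    intro A B hA hB h x hxA
    by_contra hxB
    obtain ⟨y, ⟨hyA, hyB⟩, hys⟩ := hs A hA B hB ⟨x, hxA, hxB⟩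
    exact hyB (h ▸ ⟨hyA, hys⟩ : y ∈ B ∩ s).1
  exact hUV ((subset_of_traces_eq hU hV htr).antisymm (subset_of_traces_eq hV hU htr.symm))

lemma forall_diff_inter_nonempty_iff_traces_injective
    (hinter : ∀ U ∈ 𝒞, ∀ V ∈ 𝒞, U ∩ V ∈ 𝒞) :
    (∀ U ∈ 𝒞, ∀ V ∈ 𝒞, (U \ V).Nonempty → (U \ V ∩ s).Nonempty) ↔
      ∀ U ∈ 𝒞, ∀ V ∈ 𝒞, U ≠ V → U ∩ s ≠ V ∩ s :=
  ⟨fun hs _ hU _ hV => traces_ne_of_diff_inter_nonempty hs hU hV,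
    fun hs _ hU _ hV => diff_inter_nonempty_of_traces_ne hinter hs hU hV⟩

end TraceInjective

section StronglyLocallySpectral

variable {X : Type*} [TopologicalSpace X]

lemma union_mem_CO {U V : Set X} (hU : U ∈ CO X) (hV : V ∈ CO X) : U ∪ V ∈ CO X :=
  ⟨hU.1.union hV.1, hU.2.union hV.2⟩

lemma SO_subset_CO : SO X ⊆ CO X := fun _ ⟨hWopen, hWcompact, _⟩ =>
  ⟨isCompact_iff_compactSpace.mpr hWcompact, hWopen⟩

lemma StronglyLocallySpectral.sUnion_CO (hX : StronglyLocallySpectral X) : ⋃₀ CO X = univ :=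
  eq_univ_of_univ_subset (hX.1 ▸ sUnion_mono SO_subset_CO)

lemma StronglyLocallySpectral.inter_mem_CO (hX : StronglyLocallySpectral X) {U V : Set X}
    (hU : U ∈ CO X) (hV : V ∈ CO X) : U ∩ V ∈ CO X :=
  ⟨hX.2 U hU V hV, hU.2.inter hV.2⟩

lemma StronglyLocallySpectral.isTopologicalBasis_patchTop (hX : StronglyLocallySpectral X) :
    @IsTopologicalBasis X (patchTop X) {S | ∃ U ∈ CO X, ∃ V ∈ CO X, S = U \ V} := by
  refine @IsTopologicalBasis.mk X (patchTop X) _ ?_ ?_ rfl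
  · rintro _ ⟨A₁, hA₁, B₁, hB₁, rfl⟩ _ ⟨A₂, hA₂, B₂, hB₂, rfl⟩ x ⟨⟨hxA₁, hxB₁⟩, hxA₂, hxB₂⟩
    refine ⟨(A₁ ∩ A₂) \ (B₁ ∪ B₂),
      ⟨_, hX.inter_mem_CO hA₁ hA₂, _, union_mem_CO hB₁ hB₂, rfl⟩, ?_, ?_⟩
    · exact ⟨⟨hxA₁, hxA₂⟩, fun h => h.elim hxB₁ hxB₂⟩
    · rintro y ⟨⟨hyA₁, hyA₂⟩, hyB⟩
      exact ⟨⟨hyA₁, fun h => hyB (.inl h)⟩, hyA₂, fun h => hyB (.inr h)⟩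
  · refine eq_univ_of_forall fun x => ?_
    obtain ⟨U, hU, hxU⟩ := mem_sUnion.mp (hX.sUnion_CO ▸ mem_univ x)
    exact ⟨U, ⟨U, hU, ∅, ⟨isCompact_empty, isOpen_empty⟩, sdiff_empty.symm⟩, hxU⟩

end StronglyLocallySpectral

/-- STATEMENT 11: In a strongly locally spectral space, a subset `Xd` is dense in the
patch topology iff it is decent (distinct compact open sets have distinct traces). -/
theorem sls_patchDense_iff_decent {X : Type*} [TopologicalSpace X]
    (hX : StronglyLocallySpectral X) (Xd : Set X) :
    @Dense X (patchTop X) Xd ↔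
      ∀ U ∈ CO X, ∀ V ∈ CO X, U ≠ V → U ∩ Xd ≠ V ∩ Xd := by
  rw [@IsTopologicalBasis.dense_iff X (patchTop X) _ hX.isTopologicalBasis_patchTop Xd,
    ← forall_diff_inter_nonempty_iff_traces_injective fun _ hU _ hV => hX.inter_mem_CO hU hV]
  constructor
  · exact fun h U hU V hV => h _ ⟨U, hU, V, hV, rfl⟩
  · rintro h _ ⟨U, hU, V, hV, rfl⟩
    exact h U hU V hV
end

section
/- For a topological space (X, τ_X), the following are equivalent: (1) X is strongly locally spectral; (2) X is T0, CO(X) is a basis of τ_X closed under finite intersections, and the condition (∗) holds: for every closed set F and every subfamily C ⊆ CO(X) such that every finite subfamily C₁, …, Cₙ of C satisfies F ∩ C₁ ∩ … ∩ Cₙ ≠ ∅, the intersection F ∩ ⋂C is nonempty. -/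
open Set TopologicalSpace Topology

/-! Both sides say that `X` is T0, sober, quasi-separated and has a basis of compact opens:
being covered by open spectral subspaces is local for the first three and gives the basis, and
conversely each compact open of such a space is spectral. It remains to relate sobriety to (∗).
Given (∗), the compact opens meeting an irreducible closed set `S` have a common point in `S`,
which is generic. Conversely, a centered family `F, C₁, C₂, …` generates a filter with a basis of
compact sets `F ∩ C₁ ∩ ⋯ ∩ Cₙ`; by Zorn some closed set is minimal among those meeting all its
members, it is irreducible by minimality, and its generic point lies in `F` and in every `Cᵢ`. -/

open Filter

section CompactBasis

variable {X : Type*} [TopologicalSpace X] {f : Filter X}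

lemma frequently_mem_sInter_of_isChain (hf : ∀ V ∈ f, ∃ K ∈ f, IsCompact K ∧ K ⊆ V)
    {c : Set (Set X)} (hc : IsChain (· ⊆ ·) c) (hne : c.Nonempty) (hcl : ∀ G ∈ c, IsClosed G)
    (hfreq : ∀ G ∈ c, ∃ᶠ x in f, x ∈ G) : ∃ᶠ x in f, x ∈ ⋂₀ c := by
  have : Nonempty c := hne.to_subtype
  refine frequently_iff.2 fun {V} hV => ?_
  obtain ⟨K, hKf, hK, hKV⟩ := hf V hV
  by_contra! hdisj
  have hKc : K ∩ ⋂ G : c, (G : Set X) = ∅ := by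
    rw [← sInter_eq_iInter, eq_empty_iff_forall_notMem]
    exact fun x hx => hdisj x (hKV hx.1) hx.2
  obtain ⟨G, hG⟩ := hK.elim_directed_family_closed (fun G : c => (G : Set X)) (fun G => hcl G G.2)
    hKc fun G H => (hc.total G.2 H.2).elim (fun h => ⟨G, subset_rfl, h⟩) fun h => ⟨H, h, subset_rfl⟩
  obtain ⟨x, hxG, hxK⟩ := ((hfreq G G.2).and_eventually hKf).exists
  exact hG.subset ⟨hxK, hxG⟩

lemma exists_minimal_isClosed_frequently_mem [f.NeBot]
    (hf : ∀ V ∈ f, ∃ K ∈ f, IsCompact K ∧ K ⊆ V) :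
    ∃ G, Minimal (fun G => IsClosed G ∧ ∃ᶠ x in f, x ∈ G) G := by
  obtain ⟨G, -, hG⟩ := zorn_superset_nonempty {G | IsClosed G ∧ ∃ᶠ x in f, x ∈ G}
    (fun c hcS hc hne => ⟨⋂₀ c, ⟨isClosed_sInter fun G hG => (hcS hG).1,
      frequently_mem_sInter_of_isChain hf hc hne (fun G hG => (hcS hG).1)
        fun G hG => (hcS hG).2⟩, fun _ => sInter_subset_of_mem⟩)
    univ ⟨isClosed_univ, .of_forall mem_univ⟩
  exact ⟨G, hG⟩

/-- If two opens `u`, `v` met `G` but not each other inside `G`, then `f` would frequently meet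
one of the proper closed subsets `G \ u`, `G \ v`. -/
lemma Minimal.isIrreducible_of_isClosed_frequently_mem {G : Set X}
    (hG : Minimal (fun G => IsClosed G ∧ ∃ᶠ x in f, x ∈ G) G) : IsIrreducible G := by
  refine ⟨hG.prop.2.exists, fun u v hu hv ⟨a, haG, hau⟩ ⟨b, hbG, hbv⟩ => ?_⟩
  by_contra! huv
  have hcover : ∃ᶠ x in f, x ∈ G \ u ∨ x ∈ G \ v :=
    hG.prop.2.mono fun x hxG => by
      by_cases hxu : x ∈ u
      · exact .inr ⟨hxG, fun hxv => huv.subset ⟨hxG, hxu, hxv⟩⟩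
      · exact .inl ⟨hxG, hxu⟩
  rcases frequently_or_distrib.1 hcover with h | h
  · exact (hG.le_of_le ⟨hG.prop.1.sdiff hu, h⟩ sdiff_subset haG).2 hau
  · exact (hG.le_of_le ⟨hG.prop.1.sdiff hv, h⟩ sdiff_subset hbG).2 hbv

lemma exists_forall_mem_of_isCompact_basis [QuasiSober X] [f.NeBot]
    (hf : ∀ V ∈ f, ∃ K ∈ f, IsCompact K ∧ K ⊆ V) :
    ∃ x, (∀ D ∈ f, IsClosed D → x ∈ D) ∧ ∀ U ∈ f, IsOpen U → x ∈ U := by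
  obtain ⟨G, hG⟩ := exists_minimal_isClosed_frequently_mem hf
  obtain ⟨x, hx⟩ := QuasiSober.sober hG.isIrreducible_of_isClosed_frequently_mem hG.prop.1
  refine ⟨x, fun D hD hDcl => ?_, fun U hU hUo => ?_⟩
  · exact (hG.le_of_le ⟨hG.prop.1.inter hDcl, hG.prop.2.and_eventually hD⟩
      inter_subset_left hx.mem).2
  · exact (hx.mem_open_set_iff hUo).2 (hG.prop.2.and_eventually hU).exists

lemma exists_isCompact_subset_of_mem_inf_principal
    (hf : ∀ V ∈ f, ∃ K ∈ f, IsCompact K ∧ K ⊆ V) {F : Set X} (hF : IsClosed F) :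
    ∀ V ∈ f ⊓ 𝓟 F, ∃ K ∈ f ⊓ 𝓟 F, IsCompact K ∧ K ⊆ V := by
  intro V hV
  obtain ⟨W, hW, F', hF', hWV⟩ := mem_inf_iff_superset.1 hV
  obtain ⟨K, hKf, hK, hKW⟩ := hf W hW
  exact ⟨K ∩ F, inter_mem_inf hKf (mem_principal_self F), hK.inter_right hF,
    (inter_subset_inter hKW hF').trans hWV⟩

end CompactBasis

section CompactOpen

variable {X : Type*} [TopologicalSpace X]

lemma CO_eq : CO X = {U | IsOpen U ∧ IsCompact U} :=
  ext fun _ => and_comm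

lemma prespectralSpace_iff_isTopologicalBasis_CO :
    PrespectralSpace X ↔ IsTopologicalBasis (CO X) := by
  rw [prespectralSpace_iff, CO_eq]

lemma quasiSeparatedSpace_iff_inter_mem_CO :
    QuasiSeparatedSpace X ↔ ∀ U ∈ CO X, ∀ V ∈ CO X, U ∩ V ∈ CO X := by
  rw [quasiSeparatedSpace_iff]
  exact ⟨fun h U hU V hV => ⟨h U V hU.2 hU.1 hV.2 hV.1, hU.2.inter hV.2⟩,
    fun h U V hUo hUc hVo hVc => (h U ⟨hUc, hUo⟩ V ⟨hVc, hVo⟩).1⟩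

lemma isSpectralTopSpace_iff : IsSpectralTopSpace X ↔ SpectralSpace X := by
  rw [IsSpectralTopSpace, ← prespectralSpace_iff_isTopologicalBasis_CO,
    ← quasiSeparatedSpace_iff_inter_mem_CO]
  exact ⟨fun ⟨_, _, _, _, _⟩ => {}, fun _ => ⟨inferInstance, inferInstance, inferInstance,
    inferInstance, inferInstance⟩⟩

lemma stronglyLocallySpectral_iff :
    StronglyLocallySpectral X ↔ ⋃₀ SO X = univ ∧ QuasiSeparatedSpace X := by
  rw [quasiSeparatedSpace_iff_inter_mem_CO]
  exact and_congr_right' ⟨fun h U hU V hV => ⟨h U hU V hV, hU.2.inter hV.2⟩,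
    fun h U hU V hV => (h U hU V hV).1⟩

lemma exists_mem_CO_subset_of_mem_generate [QuasiSeparatedSpace X] {C : Set (Set X)}
    (hC : C ⊆ CO X) (hne : C.Nonempty) {V : Set X} (hV : V ∈ generate C) :
    ∃ K ∈ generate C, K ∈ CO X ∧ K ⊆ V := by
  induction hV with
  | basic hV => exact ⟨_, mem_generate_of_mem hV, hC hV, subset_rfl⟩
  | univ =>
    obtain ⟨C₀, hC₀⟩ := hne
    exact ⟨C₀, mem_generate_of_mem hC₀, hC hC₀, subset_univ _⟩
  | superset _ hst ih =>
    obtain ⟨K, hK, hKCO, hKs⟩ := ih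
    exact ⟨K, hK, hKCO, hKs.trans hst⟩
  | inter _ _ ih₁ ih₂ =>
    obtain ⟨K₁, hK₁, hK₁CO, hK₁s⟩ := ih₁
    obtain ⟨K₂, hK₂, hK₂CO, hK₂t⟩ := ih₂
    exact ⟨K₁ ∩ K₂, inter_mem hK₁ hK₂, quasiSeparatedSpace_iff_inter_mem_CO.1 ‹_› _ hK₁CO _ hK₂CO,
      inter_subset_inter hK₁s hK₂t⟩

lemma nonempty_inter_sInter_of_forall_finset [QuasiSober X] [QuasiSeparatedSpace X]
    {F : Set X} (hF : IsClosed F) {C : Set (Set X)} (hC : C ⊆ CO X)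
    (hfin : ∀ 𝒮 : Finset (Set X), ↑𝒮 ⊆ C → (F ∩ ⋂₀ (𝒮 : Set (Set X))).Nonempty) :
    (F ∩ ⋂₀ C).Nonempty := by
  rcases C.eq_empty_or_nonempty with rfl | hne
  · simpa using hfin ∅ (by simp)
  have : (generate C ⊓ 𝓟 F).NeBot := inf_principal_neBot_iff.2 fun U hU => by
    obtain ⟨t, htC, ht, htU⟩ := mem_generate_iff.1 hU
    obtain ⟨x, hxF, hxt⟩ := hfin ht.toFinset (by simpa using htC)
    exact ⟨x, htU (by simpa using hxt), hxF⟩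
  have hbasis : ∀ V ∈ generate C, ∃ K ∈ generate C, IsCompact K ∧ K ⊆ V := fun V hV =>
    let ⟨K, hK, hKCO, hKV⟩ := exists_mem_CO_subset_of_mem_generate hC hne hV
    ⟨K, hK, hKCO.1, hKV⟩
  obtain ⟨x, hxcl, hxop⟩ :=
    exists_forall_mem_of_isCompact_basis (exists_isCompact_subset_of_mem_inf_principal hbasis hF)
  exact ⟨x, hxcl F (mem_inf_of_right (mem_principal_self F)) hF,
    fun V hV => hxop V (mem_inf_of_left (mem_generate_of_mem hV)) (hC hV).2⟩

lemma quasiSober_of_forall_nonempty_inter_sInter (hb : IsTopologicalBasis (CO X))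
    (h : ∀ F : Set X, IsClosed F → ∀ C ⊆ CO X,
      (∀ 𝒮 : Finset (Set X), ↑𝒮 ⊆ C → (F ∩ ⋂₀ (𝒮 : Set (Set X))).Nonempty) →
      (F ∩ ⋂₀ C).Nonempty) : QuasiSober X := by
  refine ⟨fun {S} hS hScl => ?_⟩
  obtain ⟨x, hxS, hxC⟩ := h S hScl {V ∈ CO X | (S ∩ V).Nonempty} (sep_subset _ _)
    fun 𝒮 h𝒮 => isIrreducible_iff_sInter.1 hS 𝒮 (fun V hV => (h𝒮 hV).1.2) fun V hV => (h𝒮 hV).2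
  refine ⟨x, (closure_minimal (singleton_subset_iff.2 hxS) hScl).antisymm fun y hy => ?_⟩
  exact hb.mem_closure_iff.2 fun V hV hyV => ⟨x, hxC V ⟨hV, y, hy, hyV⟩, rfl⟩

lemma spectralSpace_of_mem_CO [T0Space X] [QuasiSober X] [QuasiSeparatedSpace X]
    [PrespectralSpace X] {U : Set X} (hU : U ∈ CO X) : SpectralSpace U :=
  have hemb := hU.2.isOpenEmbedding_subtypeVal
  { toT0Space := hemb.isEmbedding.t0Space
    toCompactSpace := isCompact_iff_compactSpace.1 hU.1
    toQuasiSober := hemb.quasiSober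
    toQuasiSeparatedSpace := hemb.quasiSeparatedSpace
    toPrespectralSpace := hemb.prespectralSpace }

lemma sUnion_SO_eq_univ [T0Space X] [QuasiSober X] [QuasiSeparatedSpace X]
    [hX : PrespectralSpace X] : ⋃₀ SO X = univ := by
  refine eq_univ_of_forall fun x => ?_
  obtain ⟨U, hU, hxU, -⟩ :=
    (prespectralSpace_iff_isTopologicalBasis_CO.1 hX).exists_subset_of_mem_open (mem_univ x)
      isOpen_univ
  exact ⟨U, ⟨hU.2, isSpectralTopSpace_iff.2 (spectralSpace_of_mem_CO hU)⟩, hxU⟩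

lemma t0Space_of_sUnion_SO_eq_univ (hcov : ⋃₀ SO X = univ) : T0Space X :=
  T0Space.of_open_cover fun x => by
    obtain ⟨U, hU, hxU⟩ : x ∈ ⋃₀ SO X := hcov ▸ mem_univ x
    exact ⟨U, hxU, hU.1, (isSpectralTopSpace_iff.1 hU.2).toT0Space⟩

lemma quasiSober_of_sUnion_SO_eq_univ (hcov : ⋃₀ SO X = univ) : QuasiSober X :=
  have : ∀ U : SO X, QuasiSober U := fun U => (isSpectralTopSpace_iff.1 U.2.2).toQuasiSober
  quasiSober_of_open_cover (SO X) (fun U => U.2.1) hcov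

lemma prespectralSpace_of_sUnion_SO_eq_univ (hcov : ⋃₀ SO X = univ) : PrespectralSpace X :=
  have : ∀ U : SO X, PrespectralSpace U := fun U =>
    (isSpectralTopSpace_iff.1 U.2.2).toPrespectralSpace
  PrespectralSpace.of_isOpenCover (U := fun U : SO X => ⟨U, U.2.1⟩)
    (IsOpenCover.of_sets (fun U => U.2.1) (by rwa [← sUnion_eq_iUnion]))

end CompactOpen

/-- STATEMENT 15: A topological space is strongly locally spectral iff it is T0,
`CO(X)` is a basis of the topology closed under finite intersections, and the
centered-intersection condition (∗) holds. -/
theorem sls_iff_stone_conditions {X : Type*} [TopologicalSpace X] :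
    StronglyLocallySpectral X ↔
      (T0Space X ∧ TopologicalSpace.IsTopologicalBasis (CO X) ∧
        (∀ U ∈ CO X, ∀ V ∈ CO X, U ∩ V ∈ CO X) ∧
        ∀ F : Set X, IsClosed F → ∀ C ⊆ CO X,
          (∀ 𝒮 : Finset (Set X), ↑𝒮 ⊆ C → (F ∩ ⋂₀ (𝒮 : Set (Set X))).Nonempty) →
          (F ∩ ⋂₀ C).Nonempty) := by
  rw [stronglyLocallySpectral_iff, ← prespectralSpace_iff_isTopologicalBasis_CO,
    ← quasiSeparatedSpace_iff_inter_mem_CO]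
  constructor
  · rintro ⟨hcov, _⟩
    have := quasiSober_of_sUnion_SO_eq_univ hcov
    exact ⟨t0Space_of_sUnion_SO_eq_univ hcov, prespectralSpace_of_sUnion_SO_eq_univ hcov,
      inferInstance, fun F hF C hC => nonempty_inter_sInter_of_forall_finset hF hC⟩
  · rintro ⟨_, hpre, _, hstar⟩
    have := quasiSober_of_forall_nonempty_inter_sInter
      (prespectralSpace_iff_isTopologicalBasis_CO.1 hpre) hstar
    exact ⟨sUnion_SO_eq_univ, inferInstance⟩
end
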